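/- Let r₁ ≥ ... ≥ r_M ∈ (0,1) be distinct with positive integer multiplicities m₁,...,m_M, let D_ℓ be the unique real solution of (1/m_M)(r_M^{-1})^{D_ℓ} + ∑_{k=1}^{M-1}(m_k/m_M)(r_k/r_M)^{D_ℓ} = 1, and let f(s) = 1 - ∑_{k=1}^M m_k r_k^s for s ∈ ℂ. Then for every s with Re(s) < D_ℓ, |f(s)| ≥ m_M r_M^{Re(s)}(1 - p(Re(s))) > 0, where p(t) = (1/m_M)(r_M^{-1})^t + ∑_{k=1}^{M-1}(m_k/m_M)(r_k/r_M)^t. In particular f has no zeros in the half-plane {Re(s) < D_ℓ}. -/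

import Mathlib

/-!
Put `σ = Re s`. Since `|r^s| = r^σ`, the reverse triangle inequality applied to the dominant term
`m_M r_M^s` of `1 - ∑ m_k r_k^s` gives `|f(s)| ≥ m_M r_M^σ - 1 - ∑_{k<M} m_k r_k^σ`, and the right
side is `m_M r_M^σ (1 - p(σ))`. It is positive because `p` is strictly increasing
(`r_M⁻¹ > 1` and `r_k / r_M ≥ 1`), so `p(σ) < p(D_ℓ) = 1`.
-/

open Finset

theorem norm_sub_sum_ge_norm_last {E : Type*} [SeminormedAddCommGroup E] {M : ℕ}
    (a : E) (z : Fin (M+1) → E) :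
    ‖z (Fin.last M)‖ - ‖a‖ - ∑ k : Fin M, ‖z k.castSucc‖ ≤ ‖a - ∑ k, z k‖ := by
  have hsplit : a - ∑ k, z k = (a - ∑ k : Fin M, z k.castSucc) - z (Fin.last M) := by
    rw [Fin.sum_univ_castSucc]; abel
  have hrest : ‖a - ∑ k : Fin M, z k.castSucc‖ ≤ ‖a‖ + ∑ k : Fin M, ‖z k.castSucc‖ :=
    (norm_sub_le _ _).trans (add_le_add_right (norm_sum_le _ _) _)
  have := norm_sub_norm_le (z (Fin.last M)) (a - ∑ k : Fin M, z k.castSucc)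
  rw [hsplit, norm_sub_rev]
  linarith

theorem norm_natCast_mul_ofReal_cpow (n : ℕ) {x : ℝ} (hx : 0 < x) (s : ℂ) :
    ‖(n : ℂ) * (x : ℂ) ^ s‖ = n * x ^ s.re := by
  rw [norm_mul, Complex.norm_cpow_eq_rpow_re_of_pos hx, Complex.norm_natCast]

section LowerDimFunction

variable {M : ℕ} (r : Fin (M+1) → ℝ) (m : Fin (M+1) → ℕ)

/-- The paper's `p`; the lower similarity dimension `D_ℓ` solves `p D_ℓ = 1`. -/
noncomputable def lowerDimFunction (t : ℝ) : ℝ :=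
  (1 / (m (Fin.last M) : ℝ)) * (r (Fin.last M))⁻¹ ^ t
    + ∑ k : Fin M, ((m k.castSucc : ℝ) / (m (Fin.last M) : ℝ)) * (r k.castSucc / r (Fin.last M)) ^ t

variable {r m}

theorem strictMono_lowerDimFunction (hrM : r (Fin.last M) ∈ Set.Ioo 0 1)
    (hmM : 0 < m (Fin.last M)) (hanti : ∀ i, r (Fin.last M) ≤ r i) :
    StrictMono (lowerDimFunction r m) := by
  intro t u htu
  have hinv : 1 < (r (Fin.last M))⁻¹ := (one_lt_inv₀ hrM.1).mpr hrM.2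
  have hratio (k : Fin M) : 1 ≤ r k.castSucc / r (Fin.last M) :=
    (one_le_div₀ hrM.1).mpr (hanti _)
  refine add_lt_add_of_lt_of_le ?_ (sum_le_sum fun k _ => ?_)
  · gcongr
    exact Real.rpow_lt_rpow_of_exponent_lt hinv htu
  · gcongr
    exact hratio k

theorem mul_lowerDimFunction (hr : ∀ i, 0 < r i) (hmM : m (Fin.last M) ≠ 0) (t : ℝ) :
    m (Fin.last M) * r (Fin.last M) ^ t * lowerDimFunction r m t
      = 1 + ∑ k : Fin M, (m k.castSucc : ℝ) * r k.castSucc ^ t := by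
  have hrM := hr (Fin.last M)
  have : r (Fin.last M) ^ t ≠ 0 := (Real.rpow_pos_of_pos hrM t).ne'
  unfold lowerDimFunction
  rw [mul_add, mul_sum, Real.inv_rpow hrM.le]
  congr 1
  · field_simp
  · refine sum_congr rfl fun k _ => ?_
    rw [Real.div_rpow (hr _).le hrM.le]
    field_simp

end LowerDimFunction

theorem zeta_denominator_lower_bound_general
    (M : ℕ) (r : Fin (M+1) → ℝ) (m : Fin (M+1) → ℕ)
    (hr : ∀ i, r i ∈ Set.Ioo (0:ℝ) 1) (hm : ∀ i, 0 < m i)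
    (hanti : ∀ i j : Fin (M+1), i ≤ j → r j ≤ r i)
    (p : ℝ → ℝ)
    (hp : p = fun t =>
      (1 / (m (Fin.last M) : ℝ)) * (r (Fin.last M))⁻¹ ^ t
        + ∑ k : Fin M,
            ((m k.castSucc : ℝ) / (m (Fin.last M) : ℝ))
              * (r k.castSucc / r (Fin.last M)) ^ t)
    (D : ℝ) (hD : p D = 1) (s : ℂ) (hs : s.re < D) :
    (m (Fin.last M) : ℝ) * r (Fin.last M) ^ s.re * (1 - p s.re)
        ≤ ‖(1 - ∑ k : Fin (M+1), (m k : ℂ) * (r k : ℂ) ^ s)‖ ∧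
    0 < (m (Fin.last M) : ℝ) * r (Fin.last M) ^ s.re * (1 - p s.re) ∧
    (1 - ∑ k : Fin (M+1), (m k : ℂ) * (r k : ℂ) ^ s) ≠ 0 := by
  change p = lowerDimFunction r m at hp
  subst hp
  have hr0 (i : Fin (M+1)) : 0 < r i := (hr i).1
  have hp_lt : lowerDimFunction r m s.re < 1 :=
    hD ▸ strictMono_lowerDimFunction (hr _) (hm _)
      (fun i => hanti i _ (Fin.le_last i)) hs
  have hpos : 0 < (m (Fin.last M) : ℝ) * r (Fin.last M) ^ s.re * (1 - lowerDimFunction r m s.re) :=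
    mul_pos (mul_pos (by exact_mod_cast hm _) (Real.rpow_pos_of_pos (hr0 _) _)) (by linarith)
  have hbound : (m (Fin.last M) : ℝ) * r (Fin.last M) ^ s.re * (1 - lowerDimFunction r m s.re)
      ≤ ‖(1 - ∑ k : Fin (M+1), (m k : ℂ) * (r k : ℂ) ^ s)‖ := by
    have := norm_sub_sum_ge_norm_last (1 : ℂ) fun k => (m k : ℂ) * (r k : ℂ) ^ s
    simp only [norm_natCast_mul_ofReal_cpow _ (hr0 _), norm_one] at this
    rw [mul_one_sub, mul_lowerDimFunction hr0 (hm _).ne']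
    linarith
  refine ⟨hbound, hpos, fun h0 => ?_⟩
  rw [h0, norm_zero] at hbound
  linarith

/-- Lower bound for the denominator of the scaling zeta function to the left of
the lower similarity dimension; in particular it has no zeros there. -/
theorem zeta_denominator_lower_bound
    (M : ℕ) (r : Fin (M+1) → ℝ) (m : Fin (M+1) → ℕ)
    (hr : ∀ i, r i ∈ Set.Ioo (0:ℝ) 1) (hm : ∀ i, 0 < m i)
    (hanti : ∀ i j : Fin (M+1), i ≤ j → r j ≤ r i)
    (hinj : Function.Injective r)
    (p : ℝ → ℝ)
    (hp : p = fun t =>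
      (1 / (m (Fin.last M) : ℝ)) * (r (Fin.last M))⁻¹ ^ t
        + ∑ k : Fin M,
            ((m k.castSucc : ℝ) / (m (Fin.last M) : ℝ))
              * (r k.castSucc / r (Fin.last M)) ^ t)
    (D : ℝ) (hD : p D = 1) (s : ℂ) (hs : s.re < D) :
    (m (Fin.last M) : ℝ) * r (Fin.last M) ^ s.re * (1 - p s.re)
        ≤ ‖(1 - ∑ k : Fin (M+1), (m k : ℂ) * (r k : ℂ) ^ s)‖ ∧
    0 < (m (Fin.last M) : ℝ) * r (Fin.last M) ^ s.re * (1 - p s.re) ∧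
    (1 - ∑ k : Fin (M+1), (m k : ℂ) * (r k : ℂ) ^ s) ≠ 0 :=
  zeta_denominator_lower_bound_general M r m hr hm hanti p hp D hD s hs
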